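/- Let A be an m×n real matrix, σ > 0, and let D, D' be n×n diagonal matrices. With Σ = (σ²I_m + AD²Aᵀ)⁻¹ and Σ' = (σ²I_m + AD'²Aᵀ)⁻¹, the Hilbert–Schmidt norm satisfies ‖Σ − Σ'‖_HS ≥ ‖A(D'² − D²)Aᵀ‖_HS / (σ² + max(λ_max(AD²Aᵀ), λ_max(AD'²Aᵀ)))², where λ_max denotes the largest eigenvalue. -/

import Mathlib

open Matrix

/-- The Hilbert–Schmidt (Frobenius) norm of a real matrix. -/
noncomputable def hsNorm {m n : ℕ} (M : Matrix (Fin m) (Fin n) ℝ) : ℝ :=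
  Real.sqrt (∑ i, ∑ j, (M i j) ^ 2)

section aux

variable {m : ℕ}

lemma aux_dotU (U : Matrix (Fin m) (Fin m) ℝ) (hU : U ∈ Matrix.unitaryGroup (Fin m) ℝ)
    (u v : Fin m → ℝ) : (U *ᵥ u) ⬝ᵥ (U *ᵥ v) = u ⬝ᵥ v := by
  rw [dotProduct_mulVec, ← mulVec_transpose, mulVec_mulVec]
  have : Uᵀ * U = 1 := by simpa [star, conjTranspose] using hU.1
  rw [this, one_mulVec]

lemma aux_spectral_facts (S : Matrix (Fin m) (Fin m) ℝ) (hS : S.IsHermitian) (x : Fin m → ℝ) :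
    ∃ y : Fin m → ℝ, x ⬝ᵥ x = ∑ q, (y q)^2 ∧
      (S *ᵥ x) ⬝ᵥ x = ∑ q, hS.eigenvalues q * (y q)^2 ∧
      (S *ᵥ x) ⬝ᵥ (S *ᵥ x) = ∑ q, (hS.eigenvalues q)^2 * (y q)^2 := by
  set U : Matrix (Fin m) (Fin m) ℝ := (hS.eigenvectorUnitary : Matrix (Fin m) (Fin m) ℝ) with hUdef
  have hU : U ∈ Matrix.unitaryGroup (Fin m) ℝ := hS.eigenvectorUnitary.2
  set y : Fin m → ℝ := (star U) *ᵥ x with hy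
  have hUy : U *ᵥ y = x := by
    rw [hy, mulVec_mulVec]
    have : U * star U = 1 := hU.2
    rw [this, one_mulVec]
  have hdiag : (diagonal (RCLike.ofReal ∘ hS.eigenvalues) : Matrix (Fin m) (Fin m) ℝ) *ᵥ y
      = fun q => hS.eigenvalues q * y q := by
    ext q; simp [mulVec_diagonal]
  have hSx : S *ᵥ x = U *ᵥ (fun q => hS.eigenvalues q * y q) := by
    conv_lhs => rw [hS.spectral_theorem]
    rw [Unitary.conjStarAlgAut_apply, ← hUdef]
    rw [← mulVec_mulVec, ← mulVec_mulVec, ← hy, hdiag]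
  refine ⟨y, ?_, ?_, ?_⟩
  · rw [← hUy, aux_dotU U hU]
    simp [dotProduct, pow_two]
  · rw [hSx, ← hUy, aux_dotU U hU]
    simp only [dotProduct]
    exact Finset.sum_congr rfl fun q _ => by ring
  · rw [hSx, aux_dotU U hU]
    simp only [dotProduct]
    exact Finset.sum_congr rfl fun q _ => by ring

lemma aux_quad_le (S : Matrix (Fin m) (Fin m) ℝ) (hS : S.IsHermitian) (L : ℝ)
    (hL : ∀ q, hS.eigenvalues q ≤ L) (x : Fin m → ℝ) :
    (S *ᵥ x) ⬝ᵥ x ≤ L * (x ⬝ᵥ x) := by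
  obtain ⟨y, h1, h2, _⟩ := aux_spectral_facts S hS x
  rw [h1, h2, Finset.mul_sum]
  exact Finset.sum_le_sum fun q _ => mul_le_mul_of_nonneg_right (hL q) (sq_nonneg _)

lemma aux_eig_le_of_quad (S : Matrix (Fin m) (Fin m) ℝ) (hS : S.IsHermitian) (b : ℝ)
    (h : ∀ x : Fin m → ℝ, (S *ᵥ x) ⬝ᵥ x ≤ b * (x ⬝ᵥ x)) (q : Fin m) : hS.eigenvalues q ≤ b := by
  set v : Fin m → ℝ := ⇑(hS.eigenvectorBasis q) with hv
  have hev : S *ᵥ v = hS.eigenvalues q • v := hS.mulVec_eigenvectorBasis q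
  have hvne : v ≠ 0 := by
    intro h0
    exact hS.eigenvectorBasis.orthonormal.ne_zero q (by ext i; exact congrFun h0 i)
  have hvpos : 0 < v ⬝ᵥ v := by
    rcases lt_or_eq_of_le (Finset.sum_nonneg fun i _ => mul_self_nonneg (v i) :
        (0:ℝ) ≤ v ⬝ᵥ v) with h' | h'
    · exact h'
    · exact absurd (dotProduct_self_eq_zero.mp h'.symm) hvne
  have := h v
  rw [hev, smul_dotProduct, smul_eq_mul] at this
  exact le_of_mul_le_mul_right this hvpos

lemma aux_normsq_le (S : Matrix (Fin m) (Fin m) ℝ) (hS : S.IsHermitian) (K : ℝ)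
    (hK : ∀ q, |hS.eigenvalues q| ≤ K) (x : Fin m → ℝ) :
    (S *ᵥ x) ⬝ᵥ (S *ᵥ x) ≤ K^2 * (x ⬝ᵥ x) := by
  obtain ⟨y, h1, _, h3⟩ := aux_spectral_facts S hS x
  rw [h1, h3, Finset.mul_sum]
  refine Finset.sum_le_sum fun q _ => mul_le_mul_of_nonneg_right ?_ (sq_nonneg _)
  calc (hS.eigenvalues q)^2 = |hS.eigenvalues q|^2 := (sq_abs _).symm
  _ ≤ K^2 := by
      have h0 : (0:ℝ) ≤ |hS.eigenvalues q| := abs_nonneg _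
      exact pow_le_pow_left₀ h0 (hK q) 2

lemma aux_left_mul {k : ℕ} (P : Matrix (Fin m) (Fin m) ℝ) (c : ℝ)
    (h : ∀ x : Fin m → ℝ, (P *ᵥ x) ⬝ᵥ (P *ᵥ x) ≤ c * (x ⬝ᵥ x)) (N : Matrix (Fin m) (Fin k) ℝ) :
    ∑ i, ∑ j, ((P * N) i j)^2 ≤ c * ∑ i, ∑ j, (N i j)^2 := by
  calc ∑ i, ∑ j, ((P * N) i j)^2 = ∑ j, ∑ i, ((P * N) i j)^2 := Finset.sum_comm
  _ = ∑ j : Fin k, (P *ᵥ (fun r => N r j)) ⬝ᵥ (P *ᵥ (fun r => N r j)) := by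
      refine Finset.sum_congr rfl fun j _ => ?_
      simp [dotProduct, mul_apply, mulVec, pow_two]
  _ ≤ ∑ j : Fin k, c * ((fun r => N r j) ⬝ᵥ (fun r => N r j)) :=
      Finset.sum_le_sum fun j _ => h _
  _ = c * ∑ i, ∑ j, (N i j)^2 := by
      rw [← Finset.mul_sum]
      congr 1
      rw [Finset.sum_comm]
      exact Finset.sum_congr rfl fun j _ => by simp [dotProduct, pow_two]

lemma aux_right_mul {k : ℕ} (Q : Matrix (Fin m) (Fin m) ℝ) (hQ : Qᵀ = Q) (c : ℝ)
    (h : ∀ x : Fin m → ℝ, (Q *ᵥ x) ⬝ᵥ (Q *ᵥ x) ≤ c * (x ⬝ᵥ x)) (N : Matrix (Fin k) (Fin m) ℝ) :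
    ∑ i, ∑ j, ((N * Q) i j)^2 ≤ c * ∑ i, ∑ j, (N i j)^2 := by
  have h1 : ∑ i, ∑ j, ((N * Q) i j)^2 = ∑ i, ∑ j, ((Q * Nᵀ) i j)^2 := by
    rw [Finset.sum_comm]
    refine Finset.sum_congr rfl fun j _ => Finset.sum_congr rfl fun i _ => ?_
    have : (Q * Nᵀ) j i = ((N * Q)ᵀ) j i := by
      rw [transpose_mul, hQ]
    rw [this, transpose_apply]
  have h2 : ∑ i, ∑ j, (N i j)^2 = ∑ i, ∑ j, ((Nᵀ) i j)^2 := by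
    rw [Finset.sum_comm]; rfl
  rw [h1, h2]
  exact aux_left_mul Q c h Nᵀ

end aux

theorem stmt6 {m n : ℕ} (A : Matrix (Fin m) (Fin n) ℝ) (D D' : Matrix (Fin n) (Fin n) ℝ)
    (hD : D.IsDiag) (hD' : D'.IsDiag) (σ : ℝ) (hσ : 0 < σ)
    (hH : (A * D ^ 2 * Aᵀ).IsHermitian) (hH' : (A * D' ^ 2 * Aᵀ).IsHermitian) :
    hsNorm (A * (D' ^ 2 - D ^ 2) * Aᵀ) /
        (σ ^ 2 + max (⨆ q, hH.eigenvalues q) (⨆ q, hH'.eigenvalues q)) ^ 2 ≤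
      hsNorm ((σ ^ 2 • (1 : Matrix (Fin m) (Fin m) ℝ) + A * D ^ 2 * Aᵀ)⁻¹ -
        (σ ^ 2 • (1 : Matrix (Fin m) (Fin m) ℝ) + A * D' ^ 2 * Aᵀ)⁻¹) := by
  rcases Nat.eq_zero_or_pos m with hm | hm
  · subst hm
    have h0 : hsNorm (A * (D' ^ 2 - D ^ 2) * Aᵀ) = 0 := by
      simp [hsNorm]
    rw [h0, zero_div]
    exact Real.sqrt_nonneg _
  haveI : NeZero m := ⟨hm.ne'⟩
  set M : Matrix (Fin m) (Fin m) ℝ := A * (D' ^ 2 - D ^ 2) * Aᵀ with hMdef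
  set B : Matrix (Fin m) (Fin m) ℝ := A * D ^ 2 * Aᵀ with hBdef
  set B' : Matrix (Fin m) (Fin m) ℝ := A * D' ^ 2 * Aᵀ with hB'def
  set S : Matrix (Fin m) (Fin m) ℝ := σ ^ 2 • 1 + B with hSdef
  set S' : Matrix (Fin m) (Fin m) ℝ := σ ^ 2 • 1 + B' with hS'def
  -- positive semidefiniteness of B and B'
  have hpsd : ∀ (E : Matrix (Fin n) (Fin n) ℝ), E.IsDiag →
      (A * E ^ 2 * Aᵀ).PosSemidef := by
    intro E hE
    have hEt : Eᵀ = E := hE.isSymm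
    have : A * E ^ 2 * Aᵀ = (A * E) * (A * E)ᴴ := by
      rw [conjTranspose_eq_transpose_of_trivial, transpose_mul, hEt, pow_two]
      simp only [Matrix.mul_assoc]
    rw [this]
    exact posSemidef_self_mul_conjTranspose _
  have hBpsd : B.PosSemidef := hpsd D hD
  have hB'psd : B'.PosSemidef := hpsd D' hD'
  -- positive definiteness of S and S'
  have hsm : (σ ^ 2 • (1 : Matrix (Fin m) (Fin m) ℝ)).PosDef := by
    have : σ ^ 2 • (1 : Matrix (Fin m) (Fin m) ℝ) = diagonal (fun _ => σ ^ 2) := by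
      ext i j
      rcases eq_or_ne i j with h | h <;>
        simp [h, Matrix.smul_apply, Matrix.one_apply, Matrix.diagonal_apply]
    rw [this]
    exact posDef_diagonal_iff.mpr fun _ => pow_pos hσ 2
  have hSpd : S.PosDef := hsm.add_posSemidef hBpsd
  have hS'pd : S'.PosDef := hsm.add_posSemidef hB'psd
  -- the bound L on eigenvalues of B, B'
  set L : ℝ := max (⨆ q, hH.eigenvalues q) (⨆ q, hH'.eigenvalues q) with hLdef
  have hsupB : ∀ q, hH.eigenvalues q ≤ L := fun q =>
    le_trans (le_ciSup (Set.Finite.bddAbove (Set.finite_range _)) q) (le_max_left _ _)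
  have hsupB' : ∀ q, hH'.eigenvalues q ≤ L := fun q =>
    le_trans (le_ciSup (Set.Finite.bddAbove (Set.finite_range _)) q) (le_max_right _ _)
  have hL0 : 0 ≤ L := le_trans (hBpsd.eigenvalues_nonneg ⟨0, hm⟩) (hsupB ⟨0, hm⟩)
  set K : ℝ := σ ^ 2 + L with hKdef
  have hK0 : 0 < K := add_pos_of_pos_of_nonneg (pow_pos hσ 2) hL0
  -- quadratic form bounds
  have hquad : ∀ (T : Matrix (Fin m) (Fin m) ℝ) (hT : (σ ^ 2 • 1 + T).PosDef)
      (hTpsd : T.PosSemidef) (hTq : ∀ x : Fin m → ℝ, (T *ᵥ x) ⬝ᵥ x ≤ L * (x ⬝ᵥ x)),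
      ∀ x : Fin m → ℝ,
        ((σ ^ 2 • 1 + T) *ᵥ x) ⬝ᵥ ((σ ^ 2 • 1 + T) *ᵥ x) ≤ K ^ 2 * (x ⬝ᵥ x) := by
    intro T hT hTpsd hTq
    refine aux_normsq_le _ hT.isHermitian K (fun q => abs_le.mpr ⟨?_, ?_⟩) 
    · exact le_trans (by linarith) (hT.posSemidef.eigenvalues_nonneg q)
    · refine aux_eig_le_of_quad _ hT.isHermitian K (fun x => ?_) q
      have h1 : ((σ ^ 2 • 1 + T) *ᵥ x) ⬝ᵥ x = σ ^ 2 * (x ⬝ᵥ x) + (T *ᵥ x) ⬝ᵥ x := by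
        rw [add_mulVec, add_dotProduct, smul_mulVec, one_mulVec, smul_dotProduct,
          smul_eq_mul]
      rw [h1, hKdef]
      have := hTq x
      nlinarith [this]
  have hBq : ∀ x : Fin m → ℝ, (B *ᵥ x) ⬝ᵥ x ≤ L * (x ⬝ᵥ x) :=
    aux_quad_le B hH L hsupB
  have hB'q : ∀ x : Fin m → ℝ, (B' *ᵥ x) ⬝ᵥ x ≤ L * (x ⬝ᵥ x) :=
    aux_quad_le B' hH' L hsupB'
  have hSnorm := hquad B hSpd hBpsd hBq
  have hS'norm := hquad B' hS'pd hB'psd hB'q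
  -- invertibility and identity
  have hdet : IsUnit S.det := hSpd.det_pos.ne'.isUnit
  have hdet' : IsUnit S'.det := hS'pd.det_pos.ne'.isUnit
  set X : Matrix (Fin m) (Fin m) ℝ := S⁻¹ - S'⁻¹ with hXdef
  have hM : M = S * X * S' := by
    have e1 : S * X * S' = S' - S := by
      rw [hXdef, Matrix.mul_sub, Matrix.sub_mul, Matrix.mul_nonsing_inv S hdet, one_mul,
        Matrix.mul_assoc, Matrix.nonsing_inv_mul S' hdet', Matrix.mul_one]
    rw [e1, hMdef, Matrix.mul_sub, Matrix.sub_mul, hS'def, hSdef]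
    show A * D' ^ 2 * Aᵀ - A * D ^ 2 * Aᵀ = (σ ^ 2 • 1 + B') - (σ ^ 2 • 1 + B)
    rw [hB'def, hBdef]
    abel
  -- Frobenius bound
  have hSsym : Sᵀ = S := by
    have := hSpd.isHermitian
    rwa [IsHermitian, conjTranspose_eq_transpose_of_trivial] at this
  have hS'sym : S'ᵀ = S' := by
    have := hS'pd.isHermitian
    rwa [IsHermitian, conjTranspose_eq_transpose_of_trivial] at this
  have hF1 : ∑ i : Fin m, ∑ j : Fin m, ((S * (X * S')) i j)^2 ≤ K ^ 2 * ∑ i : Fin m, ∑ j : Fin m, ((X * S') i j)^2 :=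
    aux_left_mul S (K ^ 2) hSnorm (X * S')
  have hF2 : ∑ i : Fin m, ∑ j : Fin m, ((X * S') i j)^2 ≤ K ^ 2 * ∑ i : Fin m, ∑ j : Fin m, (X i j)^2 :=
    aux_right_mul S' hS'sym (K ^ 2) hS'norm X
  have hF : ∑ i : Fin m, ∑ j : Fin m, (M i j)^2 ≤
      (K ^ 2) ^ 2 * ∑ i : Fin m, ∑ j : Fin m, (X i j)^2 := by
    rw [hM, Matrix.mul_assoc]
    calc ∑ i : Fin m, ∑ j : Fin m, ((S * (X * S')) i j)^2 ≤ K ^ 2 * ∑ i : Fin m, ∑ j : Fin m, ((X * S') i j)^2 := hF1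
    _ ≤ K ^ 2 * (K ^ 2 * ∑ i : Fin m, ∑ j : Fin m, (X i j)^2) :=
        mul_le_mul_of_nonneg_left hF2 (sq_nonneg K)
    _ = (K ^ 2) ^ 2 * ∑ i : Fin m, ∑ j : Fin m, (X i j)^2 := by ring
  -- put it together
  have hnorm : hsNorm M ≤ K ^ 2 * hsNorm X := by
    rw [hsNorm, hsNorm]
    calc Real.sqrt (∑ i : Fin m, ∑ j : Fin m, (M i j)^2)
        ≤ Real.sqrt ((K ^ 2) ^ 2 * ∑ i : Fin m, ∑ j : Fin m, (X i j)^2) := Real.sqrt_le_sqrt hF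
    _ = K ^ 2 * Real.sqrt (∑ i : Fin m, ∑ j : Fin m, (X i j)^2) := by
        rw [Real.sqrt_mul (sq_nonneg _), Real.sqrt_sq (sq_nonneg K)]
  rw [div_le_iff₀ (pow_pos hK0 2)]
  calc hsNorm M ≤ K ^ 2 * hsNorm X := hnorm
  _ = hsNorm X * K ^ 2 := by ring
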